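/- arXiv:2310.15856 — 4 statements merged into one kernel-verified Lean document; each statement's English description precedes it below -/
import Mathlib

section
/- Let C be a code of length n over a finite field F_q, let t ≤ n, let σ be a permutation of {1,…,n} of order exactly s, and let G be a subgroup of Aut(C). Suppose the action of G on the set of t-element subsets of {1,…,n} has exactly s orbits GT_1, …, GT_s, and that σ permutes these orbits cyclically: (GT_i)^σ = GT_{i+1} for 1 ≤ i ≤ s−1 and (GT_s)^σ = GT_1. Then the polynomial J_{C,T} + J_{C^σ,T} + ⋯ + J_{C^{σ^{s−1}},T} is independent of the choice of the t-element subset T; indeed, for every T with |T| = t it equals J_{C,T_1} + ⋯ + J_{C,T_s}. -/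
open Finset

def permCode {ι F : Type*} [Fintype ι] [DecidableEq F] (σ : Equiv.Perm ι)
    (C : Finset (ι → F)) : Finset (ι → F) :=
  C.image fun c => fun i => c (σ i)

noncomputable def jacobi {ι F : Type*} [Fintype ι] [DecidableEq ι] [DecidableEq F] [Zero F]
    (C : Finset (ι → F)) (T : Finset ι) : MvPolynomial (Fin 4) ℤ :=
  ∑ c ∈ C,
    (MvPolynomial.X 0) ^ (T.filter fun j => c j = 0).card *
    (MvPolynomial.X 1) ^ (T.filter fun j => c j ≠ 0).card *
    (MvPolynomial.X 2) ^ ((Tᶜ).filter fun j => c j = 0).card *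
    (MvPolynomial.X 3) ^ ((Tᶜ).filter fun j => c j ≠ 0).card

lemma image_compl_perm {ι : Type*} [Fintype ι] [DecidableEq ι] (σ : Equiv.Perm ι)
    (S : Finset ι) : (Sᶜ).image ⇑σ = (S.image ⇑σ)ᶜ := by
  ext i
  simp only [Finset.mem_image, Finset.mem_compl]
  constructor
  · rintro ⟨x, hx, rfl⟩ ⟨y, hy, hxy⟩
    exact hx (by rwa [← σ.injective hxy])
  · intro h
    exact ⟨σ.symm i, fun hs => h ⟨σ.symm i, hs, σ.apply_symm_apply i⟩, σ.apply_symm_apply i⟩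

lemma card_filter_image {ι : Type*} [DecidableEq ι] (σ : Equiv.Perm ι)
    (S : Finset ι) (P : ι → Prop) [DecidablePred P] :
    ((S.image ⇑σ).filter P).card = (S.filter fun j => P (σ j)).card := by
  rw [Finset.filter_image, Finset.card_image_of_injective _ σ.injective]

lemma jacobi_permCode {ι F : Type*} [Fintype ι] [DecidableEq ι] [DecidableEq F] [Zero F]
    (σ : Equiv.Perm ι) (C : Finset (ι → F)) (T' : Finset ι) :
    jacobi (permCode σ C) T' = jacobi C (T'.image ⇑σ) := by
  unfold jacobi permCode
  rw [Finset.sum_image]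
  · refine Finset.sum_congr rfl fun c _ => ?_
    rw [card_filter_image σ T' (fun j => c j = 0),
        card_filter_image σ T' (fun j => c j ≠ 0),
        ← image_compl_perm σ T',
        card_filter_image σ (T'ᶜ) (fun j => c j = 0),
        card_filter_image σ (T'ᶜ) (fun j => c j ≠ 0)]
  · intro a _ b _ h
    funext i
    have := congrFun h (σ.symm i)
    simpa using this

open Fin.NatCast in
/-- with the cyclic orbit hypothesis, the sum of Jacobi polynomials of
`C, C^σ, …, C^{σ^{s-1}}` at any `t`-subset `T'` equals `J_{C,T_1} + ⋯ + J_{C,T_s}`,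
hence is independent of `T'`. -/
theorem statement0 {n t s : ℕ} {F : Type*} [Field F] [Fintype F] [DecidableEq F]
    (C : Finset (Fin n → F)) (ht : t ≤ n)
    (σ : Equiv.Perm (Fin n)) (hσ : orderOf σ = s)
    (G : Subgroup (Equiv.Perm (Fin n)))
    (hG : ∀ g ∈ G, permCode g C = C)
    (T : Fin s → Finset (Fin n)) (hT : ∀ i, (T i).card = t)
    (horb : ∀ A : Finset (Fin n), A.card = t →
      ∃! i : Fin s, ∃ g ∈ G, (T i).image ⇑g = A)
    (hcyc : ∀ i : Fin s,
      (fun A : Finset (Fin n) => A.image ⇑σ) '' {A | ∃ g ∈ G, (T i).image ⇑g = A}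
        = {A | ∃ g ∈ G, (T (finRotate s i)).image ⇑g = A}) :
    ∀ T' : Finset (Fin n), T'.card = t →
      ∑ k ∈ Finset.range s, jacobi (permCode (σ ^ k) C) T' = ∑ i : Fin s, jacobi C (T i) := by
  intro T' hT'
  -- s is positive
  have hs : 0 < s := hσ ▸ orderOf_pos σ
  obtain ⟨m, rfl⟩ := Nat.exists_eq_succ_of_ne_zero hs.ne'
  -- invariance of jacobi under the orbit
  have hinv : ∀ (i : Fin (m + 1)) (A : Finset (Fin n)),
      (∃ g ∈ G, (T i).image ⇑g = A) → jacobi C A = jacobi C (T i) := by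
    rintro i A ⟨g, hg, rfl⟩
    rw [← jacobi_permCode, hG g hg]
  -- T' lies in some orbit
  obtain ⟨i₀, ⟨g₀, hg₀, hTg₀⟩, -⟩ := horb T' hT'
  -- key induction: T'.image (σ^k) lies in orbit i₀ + k
  have key : ∀ k : ℕ, ∃ g ∈ G, (T (i₀ + (k : Fin (m + 1)))).image ⇑g = T'.image ⇑(σ ^ k) := by
    intro k
    induction k with
    | zero => simpa using ⟨g₀, hg₀, hTg₀⟩
    | succ k ih =>
      have step := hcyc (i₀ + (k : Fin (m + 1)))
      have hmem : T'.image ⇑(σ ^ k) ∈ {A | ∃ g ∈ G, (T (i₀ + (k : Fin (m + 1)))).image ⇑g = A} := ih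
      have : (T'.image ⇑(σ ^ k)).image ⇑σ ∈
          {A | ∃ g ∈ G, (T (finRotate (m + 1) (i₀ + (k : Fin (m + 1))))).image ⇑g = A} := by
        rw [← step]; exact ⟨_, hmem, rfl⟩
      have hrot : finRotate (m + 1) (i₀ + (k : Fin (m + 1))) = i₀ + ((k + 1 : ℕ) : Fin (m + 1)) := by
        rw [finRotate_succ_apply]
        push_cast
        rw [add_assoc]
      have himg : (T'.image ⇑(σ ^ k)).image ⇑σ = T'.image ⇑(σ ^ (k + 1)) := by
        rw [Finset.image_image, pow_succ']
        rfl
      rw [hrot, himg] at this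
      exact this
  -- conclude
  have hterm : ∀ k ∈ Finset.range (m + 1),
      jacobi (permCode (σ ^ k) C) T' = jacobi C (T (i₀ + (k : Fin (m + 1)))) := by
    intro k _
    rw [jacobi_permCode]
    exact hinv _ _ (key k)
  rw [Finset.sum_congr rfl hterm, ← Fin.sum_univ_eq_sum_range (fun k => jacobi C (T (i₀ + k)))]
  · exact Fintype.sum_equiv (Equiv.addLeft i₀) _ _ (fun k => by simp)
end

section
/- Let C be a code of length n over a finite field F_q, let t ≤ n, let σ be a permutation of {1,…,n} of order exactly s, and let G be a subgroup of Aut(C). Suppose the action of G on the set of t-element subsets of {1,…,n} has exactly s orbits GT_1, …, GT_s, and that σ permutes these orbits cyclically: (GT_i)^σ = GT_{i+1} for 1 ≤ i ≤ s−1 and (GT_s)^σ = GT_1. Let f be a harmonic function of degree t that is invariant under G (f ∈ Harm_t^G). Then w_{C,f} + w_{C^σ,f} + ⋯ + w_{C^{σ^{s−1}},f} = 0 as a polynomial in x and y. -/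
open Finset

def wt {ι F : Type*} [Fintype ι] [DecidableEq F] [Zero F] (c : ι → F) : ℕ :=
  (Finset.univ.filter fun i => c i ≠ 0).card

def supp {ι F : Type*} [Fintype ι] [DecidableEq ι] [DecidableEq F] [Zero F] (c : ι → F) :
    Finset ι :=
  Finset.univ.filter fun i => c i ≠ 0

/-- `f ∈ Harm_t`: a real-valued function on the `t`-subsets of `{1,…,n}`
(extended by `0` off `X_t`) killed by the differentiation `γ`. -/
def IsHarmonic (n t : ℕ) (f : Finset (Fin n) → ℝ) : Prop :=
  (∀ z : Finset (Fin n), z.card ≠ t → f z = 0) ∧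
  (∀ y : Finset (Fin n), y.card = t - 1 →
    ∑ z ∈ Finset.powersetCard t (Finset.univ : Finset (Fin n)),
      (if y ⊆ z then f z else 0) = 0)

/-- The harmonic weight enumerator `w_{C,f}(x,y) = Σ_{c∈C} f̃(supp c) x^{n-wt c} y^{wt c}`,
for `f` of degree `k`. -/
noncomputable def hwe {n : ℕ} {F : Type*} [DecidableEq F] [Zero F]
    (C : Finset (Fin n → F)) (k : ℕ) (f : Finset (Fin n) → ℝ) : MvPolynomial (Fin 2) ℝ :=
  ∑ c ∈ C, MvPolynomial.C (∑ z ∈ Finset.powersetCard k (supp c), f z) *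
    (MvPolynomial.X 0) ^ (n - wt c) * (MvPolynomial.X 1) ^ (wt c)

section Helpers

variable {n t : ℕ}

lemma image_image_inv (π : Equiv.Perm (Fin n)) (v : Finset (Fin n)) :
    (v.image ⇑π).image ⇑π⁻¹ = v := by
  rw [Finset.image_image]
  have : ⇑π⁻¹ ∘ ⇑π = id := by funext i; simp
  rw [this, Finset.image_id]

lemma image_inv_image (π : Equiv.Perm (Fin n)) (v : Finset (Fin n)) :
    (v.image ⇑π⁻¹).image ⇑π = v := by
  have := image_image_inv π⁻¹ v
  rwa [inv_inv] at this

lemma supp_comp {F : Type*} [DecidableEq F] [Zero F] (g : Equiv.Perm (Fin n)) (c : Fin n → F) :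
    supp (fun i => c (g i)) = (supp c).image ⇑g⁻¹ := by
  ext i
  simp only [supp, mem_filter, mem_univ, true_and, Finset.mem_image]
  constructor
  · intro h; exact ⟨g i, h, by simp⟩
  · rintro ⟨j, hj, rfl⟩; simpa using hj

lemma wt_comp {F : Type*} [DecidableEq F] [Zero F] (g : Equiv.Perm (Fin n)) (c : Fin n → F) :
    wt (fun i => c (g i)) = wt c := by
  have h1 : wt (fun i => c (g i)) = (supp (fun i => c (g i))).card := rfl
  have h2 : wt c = (supp c).card := rfl
  rw [h1, h2, supp_comp, Finset.card_image_of_injective _ (Equiv.injective _)]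

lemma sum_pcs_image (π : Equiv.Perm (Fin n)) (u : Finset (Fin n)) (F : Finset (Fin n) → ℝ) :
    ∑ z ∈ powersetCard t (u.image ⇑π), F z = ∑ z ∈ powersetCard t u, F (z.image ⇑π) := by
  refine Finset.sum_nbij' (fun z => z.image ⇑π⁻¹) (fun z => z.image ⇑π) ?_ ?_ ?_ ?_ ?_
  · intro a ha
    rw [Finset.mem_powersetCard] at ha ⊢
    refine ⟨?_, by rw [Finset.card_image_of_injective _ (Equiv.injective _), ha.2]⟩
    have := Finset.image_subset_image (f := ⇑π⁻¹) ha.1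
    rwa [image_image_inv] at this
  · intro a ha
    rw [Finset.mem_powersetCard] at ha ⊢
    exact ⟨Finset.image_subset_image ha.1,
      by rw [Finset.card_image_of_injective _ (Equiv.injective _), ha.2]⟩
  · intro a _; exact image_inv_image π a
  · intro a _; exact image_image_inv π a
  · intro a _; rw [image_inv_image]

end Helpers

open Fin.NatCast Fin.CommRing

/-- with the cyclic orbit hypothesis, for every `G`-invariant harmonic
function `f` of degree `t`, `w_{C,f} + w_{C^σ,f} + ⋯ + w_{C^{σ^{s-1}},f} = 0`. -/
theorem statement1 {n t s : ℕ} {F : Type*} [Field F] [Fintype F] [DecidableEq F]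
    (C : Finset (Fin n → F)) (ht : t ≤ n)
    (σ : Equiv.Perm (Fin n)) (hσ : orderOf σ = s)
    (G : Subgroup (Equiv.Perm (Fin n)))
    (hG : ∀ g ∈ G, permCode g C = C)
    (T : Fin s → Finset (Fin n)) (hT : ∀ i, (T i).card = t)
    (horb : ∀ A : Finset (Fin n), A.card = t →
      ∃! i : Fin s, ∃ g ∈ G, (T i).image ⇑g = A)
    (hcyc : ∀ i : Fin s,
      (fun A : Finset (Fin n) => A.image ⇑σ) '' {A | ∃ g ∈ G, (T i).image ⇑g = A}
        = {A | ∃ g ∈ G, (T (finRotate s i)).image ⇑g = A})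
    (f : Finset (Fin n) → ℝ) (hf : IsHarmonic n t f)
    (hinv : ∀ g ∈ G, ∀ z : Finset (Fin n), f (z.image ⇑g) = f z) :
    ∑ k ∈ Finset.range s, hwe (permCode (σ ^ k) C) t f = 0 := by
  classical
  have hs0 : 0 < s := hσ ▸ orderOf_pos σ
  obtain ⟨m, rfl⟩ : ∃ m, s = m + 1 := ⟨s - 1, by omega⟩
  set a : Fin (m + 1) → ℝ := fun i => f (T i) with ha
  -- the total sum of f over all t-subsets is zero (harmonicity)
  obtain ⟨hf0, hf1⟩ := hf
  have htot : ∑ z ∈ powersetCard t (univ : Finset (Fin n)), f z = 0 := by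
    rcases Nat.eq_zero_or_pos t with rfl | htpos
    · have := hf1 ∅ (by simp)
      simp only [Finset.powersetCard_zero, Finset.sum_singleton] at this ⊢
      simpa using this
    · obtain ⟨t', rfl⟩ : ∃ t', t = t' + 1 := ⟨t - 1, by omega⟩
      have hsum : ∑ y ∈ powersetCard t' (univ : Finset (Fin n)),
          ∑ z ∈ powersetCard (t' + 1) (univ : Finset (Fin n)),
            (if y ⊆ z then f z else 0) = 0 :=
        Finset.sum_eq_zero fun y hy =>
          hf1 y (by rw [Nat.add_sub_cancel]; exact Finset.mem_powersetCard_univ.mp hy)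
      rw [Finset.sum_comm] at hsum
      have hinner : ∀ z ∈ powersetCard (t' + 1) (univ : Finset (Fin n)),
          ∑ y ∈ powersetCard t' (univ : Finset (Fin n)), (if y ⊆ z then f z else 0)
            = ((t' : ℝ) + 1) * f z := by
        intro z hz
        rw [← Finset.sum_filter]
        have hfz : Finset.filter (fun y => y ⊆ z) (powersetCard t' (univ : Finset (Fin n)))
            = powersetCard t' z := by
          ext y
          simp only [Finset.mem_filter, Finset.mem_powersetCard]
          exact ⟨fun h => ⟨h.2, h.1.2⟩, fun h => ⟨⟨Finset.subset_univ y, h.2⟩, h.1⟩⟩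
        rw [hfz, Finset.sum_const, Finset.card_powersetCard,
          Finset.mem_powersetCard_univ.mp hz, Nat.choose_succ_self_right,
          nsmul_eq_mul]
        push_cast
        ring
      rw [Finset.sum_congr rfl hinner, ← Finset.mul_sum] at hsum
      have hne : ((t' : ℝ) + 1) ≠ 0 := by positivity
      exact (mul_eq_zero.mp hsum).resolve_left hne
  -- step lemma for σ⁻¹
  have hstep : ∀ (i : Fin (m + 1)) (z : Finset (Fin n)),
      (∃ g ∈ G, (T (finRotate (m + 1) i)).image ⇑g = z) →
      ∃ g ∈ G, (T i).image ⇑g = z.image ⇑σ⁻¹ := by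
    intro i z hz
    have hz' : z ∈ (fun A : Finset (Fin n) => A.image ⇑σ) ''
        {A | ∃ g ∈ G, (T i).image ⇑g = A} := by
      rw [hcyc i]; exact hz
    obtain ⟨A, hA, hAz⟩ := hz'
    have hAeq : z.image ⇑σ⁻¹ = A := by
      rw [← hAz]
      exact image_image_inv σ A
    rw [hAeq]; exact hA
  -- key lemma : the k-sum over any t-set equals ∑ a i
  have key : ∀ z : Finset (Fin n), z.card = t →
      ∑ k ∈ Finset.range (m + 1), f (z.image ⇑(σ⁻¹ ^ k)) = ∑ i : Fin (m + 1), a i := by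
    intro z hz
    obtain ⟨j, ⟨g0, hg0, hg0z⟩, -⟩ := horb z hz
    have hk : ∀ k : ℕ, ∃ g ∈ G,
        (T (j - (k : Fin (m + 1)))).image ⇑g = z.image ⇑(σ⁻¹ ^ k) := by
      intro k
      induction k with
      | zero =>
        refine ⟨g0, hg0, ?_⟩
        simpa using hg0z
      | succ k ih =>
        have h1 : finRotate (m + 1) (j - ((k + 1 : ℕ) : Fin (m + 1)))
            = j - ((k : ℕ) : Fin (m + 1)) := by
          rw [finRotate_succ_apply]
          push_cast
          ring
        obtain ⟨g, hg, hgz⟩ := ih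
        have h2 := hstep (j - ((k + 1 : ℕ) : Fin (m + 1))) (z.image ⇑(σ⁻¹ ^ k))
          (by rw [h1]; exact ⟨g, hg, hgz⟩)
        obtain ⟨g', hg', hg'z⟩ := h2
        refine ⟨g', hg', ?_⟩
        rw [hg'z, Finset.image_image, ← Equiv.Perm.coe_mul, ← pow_succ']
    have hf' : ∀ k ∈ Finset.range (m + 1),
        f (z.image ⇑(σ⁻¹ ^ k)) = a (j - (k : Fin (m + 1))) := by
      intro k _
      obtain ⟨g, hg, hgz⟩ := hk k
      rw [← hgz, hinv g hg]
    rw [Finset.sum_congr rfl hf',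
      ← Fin.sum_univ_eq_sum_range (fun k => a (j - (k : Fin (m + 1)))) (m + 1)]
    simp only [Fin.cast_val_eq_self]
    exact Fintype.sum_equiv (Equiv.subLeft j) _ _ (fun k => rfl)
  -- ∑ a i = 0
  have hS : ∑ i : Fin (m + 1), a i = 0 := by
    have h1 : ∑ z ∈ powersetCard t (univ : Finset (Fin n)),
        ∑ k ∈ Finset.range (m + 1), f (z.image ⇑(σ⁻¹ ^ k))
        = (n.choose t : ℝ) * ∑ i : Fin (m + 1), a i := by
      have hcard : (powersetCard t (univ : Finset (Fin n))).card = n.choose t := by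
        rw [Finset.card_powersetCard]
        congr 1
        simp
      rw [Finset.sum_congr rfl (fun z hz => key z (Finset.mem_powersetCard_univ.mp hz)),
        Finset.sum_const, hcard, nsmul_eq_mul]
    have h2 : ∑ z ∈ powersetCard t (univ : Finset (Fin n)),
        ∑ k ∈ Finset.range (m + 1), f (z.image ⇑(σ⁻¹ ^ k)) = 0 := by
      rw [Finset.sum_comm]
      refine Finset.sum_eq_zero fun k _ => ?_
      have huniv : (univ : Finset (Fin n)).image ⇑(σ⁻¹ ^ k) = univ := by
        apply Finset.eq_univ_of_card
        rw [Finset.card_image_of_injective _ (Equiv.injective _)]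
        exact Finset.card_univ
      have := sum_pcs_image (t := t) (σ⁻¹ ^ k) (univ : Finset (Fin n)) f
      rw [huniv] at this
      rw [← this]
      exact htot
    rw [h2] at h1
    have hne : (n.choose t : ℝ) ≠ 0 := by
      have := Nat.choose_pos ht
      positivity
    exact ((mul_eq_zero.mp h1.symm).resolve_left hne)
  -- rewrite each hwe term
  have hrw : ∀ k : ℕ, hwe (permCode (σ ^ k) C) t f =
      ∑ c ∈ C, MvPolynomial.C (∑ z ∈ powersetCard t (supp c), f (z.image ⇑(σ⁻¹ ^ k))) *
        (MvPolynomial.X 0) ^ (n - wt c) * (MvPolynomial.X (1 : Fin 2)) ^ (wt c) := by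
    intro k
    unfold hwe permCode
    rw [Finset.sum_image (by
      intro c1 _ c2 _ hEq
      funext i
      have := congrFun hEq ((σ ^ k)⁻¹ i)
      simpa using this)]
    refine Finset.sum_congr rfl fun c _ => ?_
    rw [wt_comp, supp_comp, sum_pcs_image, inv_pow]
  rw [Finset.sum_congr rfl (fun k _ => hrw k), Finset.sum_comm]
  refine Finset.sum_eq_zero fun c _ => ?_
  have h0 : ∑ k ∈ Finset.range (m + 1),
      ∑ z ∈ powersetCard t (supp c), f (z.image ⇑(σ⁻¹ ^ k)) = 0 := by
    rw [Finset.sum_comm]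
    refine Finset.sum_eq_zero fun z hz => ?_
    rw [key z (Finset.mem_powersetCard.mp hz).2, hS]
  calc ∑ k ∈ Finset.range (m + 1),
        MvPolynomial.C (∑ z ∈ powersetCard t (supp c), f (z.image ⇑(σ⁻¹ ^ k))) *
          (MvPolynomial.X 0) ^ (n - wt c) * (MvPolynomial.X (1 : Fin 2)) ^ (wt c)
      = MvPolynomial.C (∑ k ∈ Finset.range (m + 1),
          ∑ z ∈ powersetCard t (supp c), f (z.image ⇑(σ⁻¹ ^ k))) *
          (MvPolynomial.X 0) ^ (n - wt c) * (MvPolynomial.X (1 : Fin 2)) ^ (wt c) := by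
        rw [map_sum, Finset.sum_mul, Finset.sum_mul]
    _ = 0 := by rw [h0, map_zero, zero_mul, zero_mul]
end

section
/- Let p be an odd prime, m a divisor of p−1, and let PR_q^m(p) =: C be the m-th power residue code of length p over F_q. Assume that −1 is an m-th power residue modulo p (this is automatic when m is odd). Let b ∈ F_p^* be an element whose class generates the cyclic quotient group F_p^*/(F_p^*)^m of order m, and let τ_b be the permutation of the coordinate set Z/pZ given by i ↦ bi. Then for every ℓ ∈ ℕ such that at least one of the codes C, C^{τ_b}, …, C^{τ_b^{m−1}} contains a codeword of weight ℓ, the multiset of supports of all codewords of weight ℓ in C ∪ C^{τ_b} ∪ ⋯ ∪ C^{τ_b^{m−1}} (one block per codeword, repeated blocks allowed) is a combinatorial 2-design on the point set Z/pZ. -/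
open Finset

/-- A multiset `B` of subsets of `Ω` is a combinatorial `t`-design if every
`t`-element subset of `Ω` is contained in the same number of members of `B`
(counted with multiplicity). -/
def isDesign {Ω : Type*} [DecidableEq Ω] (t : ℕ) (B : Multiset (Finset Ω)) : Prop :=
  ∃ lam : ℕ, ∀ T : Finset Ω, T.card = t → (B.countP fun b => T ⊆ b) = lam

open scoped Classical in
/-- The `m`-th power residue code `PR_q^m(p)` of length `p` over `Fq`:
`{c : Σ_i c_i α^{a·i} = 0 for every nonzero m-th power residue a mod p}`,
where `α` is a primitive `p`-th root of unity in an extension `F` of `Fq`. -/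
noncomputable def prCode (p m : ℕ) [NeZero p] (Fq F : Type*) [Field Fq] [Fintype Fq]
    [Field F] [Algebra Fq F] (α : F) : Finset (ZMod p → Fq) :=
  Finset.univ.filter fun c => ∀ a : ZMod p, a ≠ 0 → (∃ x : ZMod p, x ^ m = a) →
    ∑ i : ZMod p, (algebraMap Fq F (c i)) * α ^ (a * i).val = 0

section Aux

variable {p m : ℕ} [NeZero p] {Fq F : Type*} [Field Fq] [Fintype Fq] [Field F]
  [Algebra Fq F] {α : F}

lemma mem_prCode {c : ZMod p → Fq} :
    c ∈ prCode p m Fq F α ↔ ∀ a : ZMod p, a ≠ 0 → (∃ x : ZMod p, x ^ m = a) →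
      ∑ i : ZMod p, (algebraMap Fq F (c i)) * α ^ (a * i).val = 0 := by
  classical
  simp [prCode]

lemma pow_val_add (h1 : α ^ p = 1) (x y : ZMod p) :
    α ^ (x + y).val = α ^ x.val * α ^ y.val := by
  rw [ZMod.val_add, ← pow_eq_pow_mod _ h1, pow_add]

lemma shift_mem (h1 : α ^ p = 1) {c : ZMod p → Fq} (hc : c ∈ prCode p m Fq F α) (v : ZMod p) :
    (fun i => c (i + v)) ∈ prCode p m Fq F α := by
  rw [mem_prCode] at hc ⊢
  intro a ha hr
  have key : ∑ i : ZMod p, (algebraMap Fq F (c (i + v))) * α ^ (a * i).val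
      = ∑ j : ZMod p, (algebraMap Fq F (c j)) * α ^ (a * j).val * α ^ (-(a * v)).val := by
    apply Fintype.sum_equiv (Equiv.addRight v)
    intro i
    simp only [Equiv.coe_addRight]
    rw [mul_assoc, ← pow_val_add h1]
    have h2 : a * (i + v) + -(a * v) = a * i := by ring
    rw [h2]
  rw [key, ← Finset.sum_mul, hc a ha hr, zero_mul]

lemma unitmul_mem (h1 : α ^ p = 1) [Fact p.Prime] {c : ZMod p → Fq}
    (hc : c ∈ prCode p m Fq F α) (u : (ZMod p)ˣ) (hu : ∃ y : (ZMod p)ˣ, y ^ m = u) :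
    (fun i => c ((u : ZMod p) * i)) ∈ prCode p m Fq F α := by
  rw [mem_prCode] at hc ⊢
  intro a ha hr
  obtain ⟨y, hy⟩ := hu
  have ha' : a * ((u⁻¹ : (ZMod p)ˣ) : ZMod p) ≠ 0 := mul_ne_zero ha (Units.ne_zero _)
  have hr' : ∃ x : ZMod p, x ^ m = a * ((u⁻¹ : (ZMod p)ˣ) : ZMod p) := by
    obtain ⟨x, hx⟩ := hr
    refine ⟨x * ((y⁻¹ : (ZMod p)ˣ) : ZMod p), ?_⟩
    rw [mul_pow, hx]
    congr 1
    rw [← Units.val_pow_eq_pow_val, inv_pow, hy]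
  have hinv : ((u⁻¹ : (ZMod p)ˣ) : ZMod p) * ((u : (ZMod p)ˣ) : ZMod p) = 1 := by
    rw [← Units.val_mul, inv_mul_cancel, Units.val_one]
  have key : ∑ i : ZMod p, (algebraMap Fq F (c ((u : ZMod p) * i))) * α ^ (a * i).val
      = ∑ j : ZMod p, (algebraMap Fq F (c j))
          * α ^ ((a * ((u⁻¹ : (ZMod p)ˣ) : ZMod p)) * j).val := by
    apply Fintype.sum_equiv (MulAction.toPerm u)
    intro i
    simp only [MulAction.toPerm_apply, Units.smul_def, smul_eq_mul]
    have h3 : a * ((u⁻¹ : (ZMod p)ˣ) : ZMod p) * ((u : ZMod p) * i) = a * i := by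
      rw [mul_assoc, ← mul_assoc ((u⁻¹ : (ZMod p)ˣ) : ZMod p), hinv, one_mul]
    rw [h3]
  rw [key]
  exact hc _ ha' hr'

lemma toPerm_pow_apply (b : (ZMod p)ˣ) (k : ℕ) (i : ZMod p) :
    ((MulAction.toPerm b : Equiv.Perm (ZMod p)) ^ k) i = ((b ^ k : (ZMod p)ˣ) : ZMod p) * i := by
  induction k generalizing i with
  | zero => simp
  | succ k ih =>
    rw [pow_succ, Equiv.Perm.mul_apply, MulAction.toPerm_apply, Units.smul_def, smul_eq_mul,
      ih ((b : ZMod p) * i), pow_succ, Units.val_mul]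
    ring


lemma decomp' [Fact p.Prime] (hm0 : 0 < m) (b : (ZMod p)ˣ)
    (hb : ∀ k : ℕ, (∃ x : (ZMod p)ˣ, x ^ m = b ^ k) ↔ m ∣ k) (u : (ZMod p)ˣ) :
    ∃ j < m, ∃ x : (ZMod p)ˣ, u = b ^ j * x ^ m := by
  classical
  set H : Subgroup (ZMod p)ˣ := (powMonoidHom m : (ZMod p)ˣ →* (ZMod p)ˣ).range with hHdef
  haveI : H.Normal := H.normal_of_comm
  have hmem : ∀ g : (ZMod p)ˣ, g ∈ H ↔ ∃ x : (ZMod p)ˣ, x ^ m = g := by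
    intro g
    constructor
    · rintro ⟨x, rfl⟩; exact ⟨x, rfl⟩
    · rintro ⟨x, rfl⟩; exact ⟨x, rfl⟩
  have hbq : ∀ k : ℕ, ((b : (ZMod p)ˣ ⧸ H)) ^ k = 1 ↔ m ∣ k := by
    intro k
    rw [← QuotientGroup.mk_pow, QuotientGroup.eq_one_iff, hmem]
    exact hb k
  have hord : orderOf ((b : (ZMod p)ˣ ⧸ H)) = m :=
    Nat.dvd_antisymm
      (orderOf_dvd_of_pow_eq_one ((hbq m).mpr dvd_rfl))
      ((hbq (orderOf _)).mp (pow_orderOf_eq_one _))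
  haveI : IsCyclic ((ZMod p)ˣ ⧸ H) :=
    isCyclic_of_surjective (QuotientGroup.mk' H) (QuotientGroup.mk'_surjective H)
  haveI : Finite ((ZMod p)ˣ ⧸ H) := Quotient.finite _
  have hcard : Nat.card ((ZMod p)ˣ ⧸ H) = m := by
    apply Nat.dvd_antisymm
    · rw [← IsCyclic.exponent_eq_card]
      apply Monoid.exponent_dvd_of_forall_pow_eq_one
      intro g
      induction g using QuotientGroup.induction_on with
      | H g =>
        rw [← QuotientGroup.mk_pow, QuotientGroup.eq_one_iff]
        exact ⟨g, rfl⟩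
    · rw [← hord]; exact orderOf_dvd_natCard _
  have htop : Subgroup.zpowers ((b : (ZMod p)ˣ ⧸ H)) = ⊤ := by
    apply Subgroup.eq_top_of_card_eq
    rw [Nat.card_zpowers, hord, hcard]
  have hmemz : ((u : (ZMod p)ˣ ⧸ H)) ∈ Subgroup.zpowers ((b : (ZMod p)ˣ ⧸ H)) :=
    htop ▸ Subgroup.mem_top _
  have hfin : IsOfFinOrder ((b : (ZMod p)ˣ ⧸ H)) := isOfFinOrder_of_finite _
  rw [← hfin.mem_powers_iff_mem_zpowers] at hmemz
  obtain ⟨n, hn⟩ := (Submonoid.mem_powers_iff _ _).mp hmemz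
  refine ⟨n % m, Nat.mod_lt _ hm0, ?_⟩
  have hbn : ((b ^ (n % m) : (ZMod p)ˣ) : (ZMod p)ˣ ⧸ H) = ((u : (ZMod p)ˣ ⧸ H)) := by
    rw [QuotientGroup.mk_pow, ← hn]
    exact (pow_eq_pow_mod n ((hbq m).mpr dvd_rfl)).symm
  obtain ⟨x, hx⟩ := (hmem _).mp (QuotientGroup.eq.mp hbn)
  exact ⟨x, by rw [hx, mul_inv_cancel_left]⟩

lemma affine_mem [DecidableEq Fq] [Fact p.Prime] (h1 : α ^ p = 1) (hm0 : 0 < m)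
    (b : (ZMod p)ˣ) (hb : ∀ k : ℕ, (∃ x : (ZMod p)ˣ, x ^ m = b ^ k) ↔ m ∣ k)
    (u : (ZMod p)ˣ) (v : ZMod p) {c : ZMod p → Fq}
    (hc : c ∈ (Finset.range m).biUnion fun k =>
        permCode ((MulAction.toPerm b : Equiv.Perm (ZMod p)) ^ k) (prCode p m Fq F α)) :
    (fun i => c ((u : ZMod p) * i + v)) ∈ (Finset.range m).biUnion fun k =>
        permCode ((MulAction.toPerm b : Equiv.Perm (ZMod p)) ^ k) (prCode p m Fq F α) := by
  classical
  rw [Finset.mem_biUnion] at hc ⊢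
  obtain ⟨k, hk, hck⟩ := hc
  rw [permCode, Finset.mem_image] at hck
  obtain ⟨d, hd, rfl⟩ := hck
  obtain ⟨j, hj, x, hx⟩ := decomp' hm0 b hb u
  set k' := (k + j) % m with hk'def
  set qn := (k + j) / m with hqdef
  have hkj : m * qn + k' = k + j := Nat.div_add_mod (k + j) m
  set y : (ZMod p)ˣ := b ^ qn * x with hydef
  have hcoe : ((y ^ m : (ZMod p)ˣ) : ZMod p) * ((b ^ k' : (ZMod p)ˣ) : ZMod p)
      = ((b ^ k : (ZMod p)ˣ) : ZMod p) * ((u : (ZMod p)ˣ) : ZMod p) := by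
    rw [hx, hydef]
    simp only [Units.val_mul, Units.val_pow_eq_pow_val, mul_pow, ← pow_mul]
    have h2 : ((b : ZMod p)) ^ (qn * m) * ((b : ZMod p)) ^ k'
        = ((b : ZMod p)) ^ k * ((b : ZMod p)) ^ j := by
      rw [← pow_add, ← pow_add, mul_comm qn m, hkj]
    calc ((b : ZMod p)) ^ (qn * m) * ((x : ZMod p)) ^ m * ((b : ZMod p)) ^ k'
        = ((b : ZMod p)) ^ (qn * m) * ((b : ZMod p)) ^ k' * ((x : ZMod p)) ^ m := by ring
      _ = ((b : ZMod p)) ^ k * ((b : ZMod p)) ^ j * ((x : ZMod p)) ^ m := by rw [h2]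
      _ = ((b : ZMod p)) ^ k * (((b : ZMod p)) ^ j * ((x : ZMod p)) ^ m) := by ring
  set d1 : ZMod p → Fq := fun t => d (t + ((b ^ k : (ZMod p)ˣ) : ZMod p) * v) with hd1def
  have hd1 : d1 ∈ prCode p m Fq F α := shift_mem h1 hd _
  set e : ZMod p → Fq := fun t => d1 (((y ^ m : (ZMod p)ˣ) : ZMod p) * t) with hedef
  have he : e ∈ prCode p m Fq F α := unitmul_mem h1 hd1 (y ^ m) ⟨y, rfl⟩
  refine ⟨k', Finset.mem_range.mpr (Nat.mod_lt _ hm0), ?_⟩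
  rw [permCode, Finset.mem_image]
  refine ⟨e, he, ?_⟩
  funext i
  show d (((y ^ m : (ZMod p)ˣ) : ZMod p) * (((MulAction.toPerm b : Equiv.Perm (ZMod p)) ^ k') i)
      + ((b ^ k : (ZMod p)ˣ) : ZMod p) * v)
    = d (((MulAction.toPerm b : Equiv.Perm (ZMod p)) ^ k) ((u : ZMod p) * i + v))
  rw [toPerm_pow_apply, toPerm_pow_apply]
  congr 1
  linear_combination i * hcoe

lemma mem_supp_iff {ι K : Type*} [Fintype ι] [DecidableEq ι] [DecidableEq K] [Zero K]
    {c : ι → K} {i : ι} : i ∈ supp c ↔ c i ≠ 0 := by simp [supp]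

lemma count_le_aux {ι K : Type*} [Fintype ι] [DecidableEq ι] [DecidableEq K] [Zero K]
    (S : Finset (ι → K)) (e : Equiv.Perm ι)
    (hSc : ∀ c ∈ S, (fun i => c (e i)) ∈ S) (T : Finset ι) :
    (S.filter fun c => T.image e ⊆ supp c).card ≤ (S.filter fun c => T ⊆ supp c).card := by
  classical
  have hsub : ∀ c : ι → K, T.image e ⊆ supp c ↔ T ⊆ supp fun i => c (e i) := by
    intro c
    simp [Finset.image_subset_iff, Finset.subset_iff, mem_supp_iff]
  apply Finset.card_le_card_of_injOn (fun c => fun i => c (e i))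
  · intro c hcmem
    rw [Finset.mem_coe, Finset.mem_filter] at hcmem ⊢
    exact ⟨hSc c hcmem.1, (hsub c).mp hcmem.2⟩
  · intro c1 _ c2 _ hh
    funext i
    have := congrFun hh (e.symm i)
    simpa using this

end Aux

lemma wt_comp_perm {ι K : Type*} [Fintype ι] [DecidableEq K] [Zero K]
    (e : Equiv.Perm ι) (c : ι → K) : wt (fun i => c (e i)) = wt c := by
  classical
  unfold wt
  apply Finset.card_bij (fun i _ => e i)
  · intro a ha
    simp only [Finset.mem_filter, Finset.mem_univ, true_and] at ha ⊢
    exact ha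
  · intro a _ b _ h
    exact e.injective h
  · intro j hj
    refine ⟨e.symm j, ?_, by simp⟩
    simp only [Finset.mem_filter, Finset.mem_univ, true_and] at hj ⊢
    simpa using hj


/-- if `-1` is an `m`-th power residue mod `p` and the class of `b`
generates `F_p^*/(F_p^*)^m`, then for every `ℓ` the supports of the weight-`ℓ`
codewords of `C ∪ C^{τ_b} ∪ ⋯ ∪ C^{τ_b^{m-1}}`, `C = PR_q^m(p)`, form a
combinatorial 2-design whenever nonempty. -/
theorem statement2 {p m : ℕ} [NeZero p] (hp : p.Prime) (hodd : p ≠ 2)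
    (hm : m ∣ (p - 1))
    (Fq F : Type*) [Field Fq] [Fintype Fq] [DecidableEq Fq] [Field F] [Algebra Fq F]
    (α : F) (hα : IsPrimitiveRoot α p)
    (hq : ∃ x : (ZMod p)ˣ, (x : ZMod p) ^ m = ((Fintype.card Fq : ℕ) : ZMod p))
    (hneg : ∃ x : (ZMod p)ˣ, x ^ m = (-1 : (ZMod p)ˣ))
    (b : (ZMod p)ˣ)
    (hb : ∀ k : ℕ, (∃ x : (ZMod p)ˣ, x ^ m = b ^ k) ↔ m ∣ k)
    (ℓ : ℕ)
    (hne : ((((Finset.range m).biUnion fun k =>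
        permCode ((MulAction.toPerm b : Equiv.Perm (ZMod p)) ^ k) (prCode p m Fq F α)).filter
        fun c => wt c = ℓ)).Nonempty) :
    isDesign 2
      (((((Finset.range m).biUnion fun k =>
        permCode ((MulAction.toPerm b : Equiv.Perm (ZMod p)) ^ k) (prCode p m Fq F α)).filter
        fun c => wt c = ℓ)).val.map supp) := by
  classical
  haveI : Fact p.Prime := ⟨hp⟩
  have h1 : α ^ p = 1 := hα.pow_eq_one
  have hm0 : 0 < m := by
    rcases Nat.eq_zero_or_pos m with h | h
    · exfalso
      subst h
      have h2 : p - 1 = 0 := Nat.eq_zero_of_zero_dvd hm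
      have := hp.two_le
      omega
    · exact h
  set S := (((Finset.range m).biUnion fun k =>
      permCode ((MulAction.toPerm b : Equiv.Perm (ZMod p)) ^ k) (prCode p m Fq F α)).filter
      fun c => wt c = ℓ) with hSdef
  have haff : ∀ (u : (ZMod p)ˣ) (v : ZMod p),
      ∃ e : Equiv.Perm (ZMod p), ∀ i, e i = (u : ZMod p) * i + v := by
    intro u v
    refine ⟨(MulAction.toPerm u).trans (Equiv.addRight v), fun i => ?_⟩
    simp [Equiv.trans_apply, Units.smul_def]
  have hSclosed : ∀ (u : (ZMod p)ˣ) (v : ZMod p), ∀ c ∈ S,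
      (fun i => c ((u : ZMod p) * i + v)) ∈ S := by
    intro u v c hcS
    rw [hSdef, Finset.mem_filter] at hcS ⊢
    refine ⟨affine_mem h1 hm0 b hb u v hcS.1, ?_⟩
    rw [← hcS.2]
    obtain ⟨e, he⟩ := haff u v
    have hfe : (fun i => c ((u : ZMod p) * i + v)) = fun i => c (e i) := by
      funext i; rw [he]
    rw [hfe]
    exact wt_comp_perm e c
  refine ⟨(S.filter fun c => ({0, 1} : Finset (ZMod p)) ⊆ supp c).card, ?_⟩
  intro T hT
  have hcnt : (Multiset.countP (fun s => T ⊆ s) (S.val.map supp))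
      = (S.filter fun c => T ⊆ supp c).card := by
    rw [Multiset.countP_map]
    rw [show (S.filter fun c => T ⊆ supp c).card
        = Multiset.card (S.val.filter fun c => T ⊆ supp c) by rw [← Finset.filter_val]; rfl]
  rw [hcnt]
  obtain ⟨t1, t2, hne12, rfl⟩ := Finset.card_eq_two.mp hT
  have hsubne : t2 - t1 ≠ 0 := sub_ne_zero.mpr (Ne.symm hne12)
  set u0 : (ZMod p)ˣ := Units.mk0 (t2 - t1) hsubne with hu0def
  obtain ⟨e1, he1⟩ := haff u0 t1
  obtain ⟨e2, he2⟩ := haff u0⁻¹ (-(((u0⁻¹ : (ZMod p)ˣ) : ZMod p) * t1))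
  have hC1 : ∀ c ∈ S, (fun i => c (e1 i)) ∈ S := by
    intro c hc
    have h := hSclosed u0 t1 c hc
    have hfe : (fun i => c (e1 i)) = fun i => c ((u0 : ZMod p) * i + t1) := by
      funext i; rw [he1]
    rw [hfe]; exact h
  have hC2 : ∀ c ∈ S, (fun i => c (e2 i)) ∈ S := by
    intro c hc
    have h := hSclosed u0⁻¹ (-(((u0⁻¹ : (ZMod p)ˣ) : ZMod p) * t1)) c hc
    have hfe : (fun i => c (e2 i))
        = fun i => c (((u0⁻¹ : (ZMod p)ˣ) : ZMod p) * i + -(((u0⁻¹ : (ZMod p)ˣ) : ZMod p) * t1)) := by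
      funext i; rw [he2]
    rw [hfe]; exact h
  have hu0val : ((u0 : (ZMod p)ˣ) : ZMod p) = t2 - t1 := rfl
  have hval : ((u0⁻¹ : (ZMod p)ˣ) : ZMod p) * (t2 - t1) = 1 := by
    rw [← hu0val, ← Units.val_mul, inv_mul_cancel, Units.val_one]
  have himg1 : ({0, 1} : Finset (ZMod p)).image e1 = {t1, t2} := by
    rw [Finset.image_insert, Finset.image_singleton, he1, he1]
    have h01 : (u0 : ZMod p) * 0 + t1 = t1 := by ring
    have h02 : (u0 : ZMod p) * 1 + t1 = t2 := by rw [hu0val]; ring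
    rw [h01, h02]
  have himg2 : ({t1, t2} : Finset (ZMod p)).image e2 = {0, 1} := by
    rw [Finset.image_insert, Finset.image_singleton, he2, he2]
    have h11 : ((u0⁻¹ : (ZMod p)ˣ) : ZMod p) * t1 + -(((u0⁻¹ : (ZMod p)ˣ) : ZMod p) * t1) = 0 := by
      ring
    have h12 : ((u0⁻¹ : (ZMod p)ˣ) : ZMod p) * t2 + -(((u0⁻¹ : (ZMod p)ˣ) : ZMod p) * t1) = 1 := by
      linear_combination hval
    rw [h11, h12]
  have hle1 := count_le_aux S e1 hC1 {0, 1}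
  rw [himg1] at hle1
  have hle2 := count_le_aux S e2 hC2 {t1, t2}
  rw [himg2] at hle2
  exact le_antisymm hle1 hle2
end

section
/- Let G be a subgroup of S_n, let t ≥ 1, and suppose the action of G on the set X_t of t-element subsets of {1,…,n} has exactly s orbits GT_1, …, GT_s, all of the same cardinality. For a t-subset T define the Reynolds average R(T) := (1/|G|) Σ_{g∈G} T^g ∈ RX_t (where each subset is identified with its indicator function), and set f_i := R(T_i) − R(T_{i+1}) for 1 ≤ i ≤ s−1 and f_s := R(T_s) − R(T_1). Then every G-invariant harmonic function of degree t lies in the linear span of f_1, …, f_s; that is, Harm_t^G ⊆ ⟨f_1, …, f_s⟩. -/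
open Finset

open scoped Classical in
/-- The Reynolds average `R(T₀) = (1/|G|) Σ_{g∈G} T₀^g`, where a subset is
identified with its (real-valued) indicator function. -/
noncomputable def reynolds {n : ℕ} (G : Subgroup (Equiv.Perm (Fin n)))
    (T₀ : Finset (Fin n)) : Finset (Fin n) → ℝ := fun z =>
  (Nat.card G : ℝ)⁻¹ *
    ∑ g : Equiv.Perm (Fin n), (if g ∈ G ∧ T₀.image ⇑g = z then (1 : ℝ) else 0)

open scoped Classical in
lemma reynolds_zero {n t : ℕ} (G : Subgroup (Equiv.Perm (Fin n))) (T₀ : Finset (Fin n))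
    (hT : T₀.card = t) (z : Finset (Fin n)) (hz : z.card ≠ t) : reynolds G T₀ z = 0 := by
  unfold reynolds
  rw [Finset.sum_eq_zero, mul_zero]
  intro g _
  rw [if_neg]
  rintro ⟨-, rfl⟩
  exact hz (by rw [Finset.card_image_of_injective _ g.injective, hT])

open scoped Classical in
lemma reynolds_orbit {n : ℕ} (G : Subgroup (Equiv.Perm (Fin n))) (T₀ : Finset (Fin n))
    (g : Equiv.Perm (Fin n)) (hg : g ∈ G) :
    reynolds G T₀ (T₀.image ⇑g) = reynolds G T₀ T₀ := by
  unfold reynolds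
  congr 1
  rw [← Equiv.sum_comp (Equiv.mulLeft g) (fun k => if k ∈ G ∧ T₀.image ⇑k = T₀.image ⇑g then (1:ℝ) else 0)]
  apply Finset.sum_congr rfl
  intro k _
  congr 1
  have h1 : Equiv.mulLeft g k = g * k := rfl
  rw [h1, eq_iff_iff]
  have h2 : T₀.image ⇑(g * k) = (T₀.image ⇑k).image ⇑g := by
    rw [Finset.image_image]; rfl
  constructor
  · rintro ⟨hgk, himg⟩
    have hk : k ∈ G := by simpa using G.mul_mem (G.inv_mem hg) hgk
    rw [h2] at himg
    exact ⟨hk, Finset.image_injective g.injective himg⟩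
  · rintro ⟨hk, himg⟩
    refine ⟨G.mul_mem hg hk, ?_⟩
    rw [h2, himg]

open scoped Classical in
lemma reynolds_sum {n : ℕ} (G : Subgroup (Equiv.Perm (Fin n))) (T₀ : Finset (Fin n)) :
    ∑ z : Finset (Fin n), reynolds G T₀ z = 1 := by
  unfold reynolds
  rw [← Finset.mul_sum, Finset.sum_comm]
  have h : ∀ g : Equiv.Perm (Fin n),
      (∑ z : Finset (Fin n), if g ∈ G ∧ T₀.image ⇑g = z then (1:ℝ) else 0)
        = if g ∈ G then 1 else 0 := by
    intro g
    by_cases hg : g ∈ G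
    · rw [Finset.sum_eq_single (T₀.image ⇑g)]
      · simp [hg]
      · intro z _ hz; rw [if_neg]; rintro ⟨-, rfl⟩; exact hz rfl
      · simp
    · simp [hg]
  rw [Finset.sum_congr rfl (fun g _ => h g)]
  rw [Finset.sum_boole]
  have hc : (Finset.univ.filter (fun g : Equiv.Perm (Fin n) => g ∈ G)).card = Nat.card G := by
    rw [Nat.card_eq_fintype_card, Fintype.card_subtype]
  rw [hc, inv_mul_cancel₀]
  exact_mod_cast Nat.card_pos.ne'

open scoped Classical in
lemma reynolds_self_pos {n : ℕ} (G : Subgroup (Equiv.Perm (Fin n))) (T₀ : Finset (Fin n)) :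
    0 < reynolds G T₀ T₀ := by
  unfold reynolds
  apply mul_pos
  · rw [inv_pos]
    exact_mod_cast Nat.card_pos
  · have h1 : (if (1 : Equiv.Perm (Fin n)) ∈ G ∧ T₀.image ⇑(1 : Equiv.Perm (Fin n)) = T₀
        then (1:ℝ) else 0) = 1 := by
      rw [if_pos ⟨G.one_mem, by simp⟩]
    have h2 := Finset.single_le_sum
      (f := fun g : Equiv.Perm (Fin n) => if g ∈ G ∧ T₀.image ⇑g = T₀ then (1:ℝ) else 0)
      (fun g _ => by positivity) (Finset.mem_univ 1)
    rw [h1] at h2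
    linarith

open scoped Classical in
lemma reynolds_not_orbit {n : ℕ} (G : Subgroup (Equiv.Perm (Fin n))) (T₀ : Finset (Fin n))
    (z : Finset (Fin n)) (hz : ¬ ∃ g ∈ G, T₀.image ⇑g = z) : reynolds G T₀ z = 0 := by
  unfold reynolds
  rw [Finset.sum_eq_zero, mul_zero]
  intro g _
  rw [if_neg]
  rintro ⟨hg, himg⟩
  exact hz ⟨g, hg, himg⟩


noncomputable def psum {s : ℕ} (a : Fin s → ℝ) (i : Fin s) : ℝ :=
  ∑ j ∈ Finset.univ.filter (fun j : Fin s => j.val ≤ i.val), a j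

lemma psum_rot {s : ℕ} (a : Fin s → ℝ) (ha : ∑ i, a i = 0) (k : Fin s) :
    psum a (finRotate s k) - psum a k = a (finRotate s k) := by
  cases s with
  | zero => exact k.elim0
  | succ m =>
    rw [finRotate_succ_apply]
    rcases eq_or_ne k (Fin.last m) with h | h
    · subst h
      have h1 : (Fin.last m + 1 : Fin (m+1)) = 0 := by
        rw [Fin.ext_iff, Fin.val_add_one]
        simp
      rw [h1]
      have h2 : psum a (Fin.last m) = ∑ i, a i := by
        unfold psum
        apply Finset.sum_congr _ (fun _ _ => rfl)
        ext j
        simp [Nat.lt_succ_iff.mp j.isLt]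
      have h3 : psum a (0 : Fin (m+1)) = a 0 := by
        unfold psum
        have he : Finset.univ.filter (fun j : Fin (m+1) => j.val ≤ (0:Fin (m+1)).val) = {0} := by
          ext j; simp only [Finset.mem_filter, Finset.mem_univ, true_and, Finset.mem_singleton, Fin.ext_iff, show ((0:Fin (m+1)) : ℕ) = 0 from rfl]; omega
        rw [he, Finset.sum_singleton]
      rw [h2, h3, ha]; ring
    · have hk : ((k + 1 : Fin (m+1))).val = k.val + 1 := by
        rw [Fin.val_add_one, if_neg h]
      have hins : Finset.univ.filter (fun j : Fin (m+1) => j.val ≤ (k+1:Fin (m+1)).val)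
          = insert (k+1) (Finset.univ.filter (fun j : Fin (m+1) => j.val ≤ k.val)) := by
        ext j
        simp only [Finset.mem_insert, Finset.mem_filter, Finset.mem_univ, true_and, hk,
          Fin.ext_iff]
        omega
      have hnot : (k+1 : Fin (m+1)) ∉ Finset.univ.filter (fun j : Fin (m+1) => j.val ≤ k.val) := by
        simp only [Finset.mem_filter, Finset.mem_univ, true_and, hk]
        omega
      unfold psum
      rw [hins, Finset.sum_insert hnot]
      ring

/-- if `G` has exactly `s` orbits `GT_1, …, GT_s` on the `t`-subsets,
all of the same cardinality, then every `G`-invariant harmonic function of degree `t`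
lies in the span of the `f_i := R(T_i) − R(T_{i+1})` (indices mod `s`). -/
theorem statement5 {n t s : ℕ} (ht : 1 ≤ t)
    (G : Subgroup (Equiv.Perm (Fin n)))
    (T : Fin s → Finset (Fin n)) (hT : ∀ i, (T i).card = t)
    (horb : ∀ A : Finset (Fin n), A.card = t →
      ∃! i : Fin s, ∃ g ∈ G, (T i).image ⇑g = A)
    (hcard : ∀ i j : Fin s,
      {A : Finset (Fin n) | ∃ g ∈ G, (T i).image ⇑g = A}.ncard
        = {A : Finset (Fin n) | ∃ g ∈ G, (T j).image ⇑g = A}.ncard)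
    (f : Finset (Fin n) → ℝ) (hf : IsHarmonic n t f)
    (hinv : ∀ g ∈ G, ∀ z : Finset (Fin n), f (z.image ⇑g) = f z) :
    f ∈ Submodule.span ℝ (Set.range fun i : Fin s =>
      reynolds G (T i) - reynolds G (T (finRotate s i))) := by
  classical
  obtain ⟨hf1, hf2⟩ := hf
  -- Step 1: the total sum of f vanishes
  have hsum0 : ∑ z : Finset (Fin n), f z = 0 := by
    have key : ∑ z ∈ powersetCard t (univ : Finset (Fin n)),
        ∑ y ∈ powersetCard (t-1) (univ : Finset (Fin n)), (if y ⊆ z then f z else 0) = 0 := by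
      rw [Finset.sum_comm]
      exact Finset.sum_eq_zero fun y hy => hf2 y (Finset.mem_powersetCard.mp hy).2
    have h1 : ∀ z ∈ powersetCard t (univ : Finset (Fin n)),
        ∑ y ∈ powersetCard (t-1) (univ : Finset (Fin n)), (if y ⊆ z then f z else 0)
          = (t : ℝ) * f z := by
      intro z hz
      have hzc : z.card = t := (Finset.mem_powersetCard.mp hz).2
      have e1 : ∑ y ∈ powersetCard (t-1) (univ : Finset (Fin n)), (if y ⊆ z then f z else 0)
          = ((powersetCard (t-1) (univ : Finset (Fin n))).filter (· ⊆ z)).card * f z := by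
        rw [Finset.sum_ite, Finset.sum_const, Finset.sum_const_zero, add_zero, nsmul_eq_mul]
      have e2 : (powersetCard (t-1) (univ : Finset (Fin n))).filter (· ⊆ z)
          = z.powersetCard (t-1) := by
        ext y
        simp only [Finset.mem_filter, Finset.mem_powersetCard, Finset.subset_univ, true_and]
        tauto
      have e3 : (z.powersetCard (t-1)).card = t := by
        rw [Finset.card_powersetCard, hzc]
        have : t - (t - 1) = 1 := by omega
        rw [← Nat.choose_symm (Nat.sub_le t 1), this, Nat.choose_one_right]
      rw [e1, e2, e3]
    rw [Finset.sum_congr rfl h1, ← Finset.mul_sum] at key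
    have ht' : (t : ℝ) ≠ 0 := by
      exact_mod_cast (by omega : t ≠ 0)
    have hz0 : ∑ z ∈ powersetCard t (univ : Finset (Fin n)), f z = 0 :=
      (mul_eq_zero.mp key).resolve_left ht'
    rw [← Finset.sum_subset (Finset.subset_univ (powersetCard t (univ : Finset (Fin n))))
      (fun z _ hz => hf1 z (fun hc => hz (Finset.mem_powersetCard.mpr ⟨Finset.subset_univ z, hc⟩)))]
    exact hz0
  set R : Fin s → Finset (Fin n) → ℝ := fun i => reynolds G (T i) with hR
  set a : Fin s → ℝ := fun i => f (T i) / reynolds G (T i) (T i) with ha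
  -- Step 2: f is the combination ∑ a i • R i
  have hfeq : f = ∑ i, a i • R i := by
    funext z
    rw [Finset.sum_apply]
    by_cases hz : z.card = t
    · obtain ⟨j, ⟨g, hg, hgz⟩, hjuniq⟩ := horb z hz
      rw [Finset.sum_eq_single j]
      · rw [Pi.smul_apply, smul_eq_mul, hR, ha]
        simp only
        rw [← hgz, reynolds_orbit G (T j) g hg, hinv g hg,
          div_mul_cancel₀ _ (reynolds_self_pos G (T j)).ne']
      · intro i _ hij
        rw [Pi.smul_apply, smul_eq_mul, hR]
        simp only
        rw [reynolds_not_orbit G (T i) z (fun hex => hij (hjuniq i hex)), mul_zero]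
      · intro hj; exact absurd (Finset.mem_univ j) hj
    · rw [hf1 z hz]
      refine (Finset.sum_eq_zero fun i _ => ?_).symm
      rw [Pi.smul_apply, smul_eq_mul, hR]
      simp only
      rw [reynolds_zero G (T i) (hT i) z hz, mul_zero]
  -- Step 3: coefficients sum to zero
  have hasum : ∑ i, a i = 0 := by
    have h := hsum0
    rw [hfeq] at h
    have : ∑ z : Finset (Fin n), (∑ i, a i • R i) z = ∑ i, a i := by
      calc ∑ z : Finset (Fin n), (∑ i, a i • R i) z
          = ∑ z : Finset (Fin n), ∑ i, a i * R i z := by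
            refine Finset.sum_congr rfl fun z _ => ?_
            rw [Finset.sum_apply]
            exact Finset.sum_congr rfl fun i _ => by rw [Pi.smul_apply, smul_eq_mul]
        _ = ∑ i, ∑ z : Finset (Fin n), a i * R i z := Finset.sum_comm
        _ = ∑ i, a i * ∑ z : Finset (Fin n), R i z := by
            exact Finset.sum_congr rfl fun i _ => (Finset.mul_sum _ _ _).symm
        _ = ∑ i, a i := by
            refine Finset.sum_congr rfl fun i _ => ?_
            rw [hR]
            simp only
            rw [reynolds_sum G (T i), mul_one]
    rw [this] at h
    exact h
  -- Step 4: rewrite using partial sums and cyclic differences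
  set b : Fin s → ℝ := fun i => psum a i with hb
  have hbdiff : ∀ i : Fin s, b i - b ((finRotate s).symm i) = a i := by
    intro i
    have := psum_rot a hasum ((finRotate s).symm i)
    rwa [Equiv.apply_symm_apply] at this
  have hfinal : f = ∑ i, b i • (R i - R (finRotate s i)) := by
    rw [hfeq]
    have e1 : ∑ i, b i • (R i - R (finRotate s i))
        = ∑ i, b i • R i - ∑ i, b i • R (finRotate s i) := by
      rw [← Finset.sum_sub_distrib]
      exact Finset.sum_congr rfl fun i _ => smul_sub _ _ _
    have e2 : ∑ i, b i • R (finRotate s i) = ∑ i, b ((finRotate s).symm i) • R i := by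
      rw [← Equiv.sum_comp (finRotate s).symm (fun i => b i • R (finRotate s i))]
      exact Finset.sum_congr rfl fun i _ => by rw [Equiv.apply_symm_apply]
    rw [e1, e2, ← Finset.sum_sub_distrib]
    refine (Finset.sum_congr rfl fun i _ => ?_).symm
    rw [← sub_smul, hbdiff i]
  rw [hfinal]
  refine Submodule.sum_mem _ fun i _ => Submodule.smul_mem _ _ ?_
  exact Submodule.subset_span ⟨i, rfl⟩
end
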